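/- arXiv:0907.4957 — 2 statements merged into one kernel-verified Lean document; each statement's English description precedes it below -/
import Mathlib

section
/- For every integer α ≥ 1, the contour automaton A_α accepts a word u over {b, w} if and only if u = (φ(σ^k(W)))^α for some natural number k. In particular, for α = 5 the automaton recognizes exactly the contour words of the balls of the pentagrid, and for α = 7 exactly the contour words of the balls of the heptagrid. -/
/-- Operations on a 2-level iterated pushdown store. -/
inductive Op (Γ : Type*) where
  | pop1 : Op Γ
  | pop2 : Op Γ
  | push1 : List Γ → Op Γ
  | push2 : List Γ → Op Γ

/-- A 2-level pushdown store: a finite list of entries `(A, s)` with `A` a letter of `Γ`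
and `s ∈ Γ*` the inner store of the entry. -/
abbrev Store (Γ : Type*) := List (Γ × List Γ)

/-- The top symbols of a 2-level store: the letter of the top entry followed by the first
letter of its inner store when that inner store is nonempty; an element of `Γ ∪ Γ²`. -/
def topsym {Γ : Type*} : Store Γ → List Γ
  | [] => []
  | (A, s) :: _ => A :: s.take 1

/-- Apply an operation to a 2-level store (a partial operation):
`pop1` removes the top entry; `pop2` removes the first letter of the inner store of the
top entry (when nonempty); `push1 w` replaces the top entry `(A, s)` by the entries
`(w_1, s), …, (w_m, s)`; `push2 u` replaces the top entry `(A, s)` by `(A, u ++ s)`. -/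
def applyOp {Γ : Type*} : Op Γ → Store Γ → Option (Store Γ)
  | .pop1, _ :: rest => some rest
  | .pop2, (A, _ :: s) :: rest => some ((A, s) :: rest)
  | .push1 w, (_, s) :: rest => some (w.map (fun x => (x, s)) ++ rest)
  | .push2 u, (A, s) :: rest => some ((A, u ++ s) :: rest)
  | _, _ => none

/-- A 2-iterated pushdown automaton with state set `Q`, input alphabet `In` and store
alphabet `Γ`: an initial state `q0`, an initial store symbol `Z`, and a transition table
`δ` assigning to each triple `(q, a, t)` — with `a ∈ In ∪ {ε}` and `t ∈ Γ ∪ Γ²` — a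
finite set (list) of instructions `(q', op)`. -/
structure IPDA2 (Q In Γ : Type*) where
  q0 : Q
  Z : Γ
  δ : Q → Option In → List Γ → List (Q × Op Γ)

/-- A configuration: current state, remaining input word, current 2-level store. -/
abbrev Config (Q In Γ : Type*) := Q × List In × Store Γ

/-- One computation step: an instruction from `δ(q, a, topsym ω)` may be applied, where
`a = ε` (no input consumed) or `a` is the first letter of the remaining input (which is
then consumed); the state changes to `q'` and the operation is applied to the store. -/
inductive IPDA2.Step {Q In Γ : Type*} (M : IPDA2 Q In Γ) :
    Config Q In Γ → Config Q In Γ → Prop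
  | eps {q q' : Q} {w : List In} {ω ω' : Store Γ} {op : Op Γ} :
      (q', op) ∈ M.δ q none (topsym ω) → applyOp op ω = some ω' →
      M.Step (q, w, ω) (q', w, ω')
  | read {q q' : Q} {a : In} {w : List In} {ω ω' : Store Γ} {op : Op Γ} :
      (q', op) ∈ M.δ q (some a) (topsym ω) → applyOp op ω = some ω' →
      M.Step (q, a :: w, ω) (q', w, ω')

/-- A finite sequence of computation steps. -/
def IPDA2.Steps {Q In Γ : Type*} (M : IPDA2 Q In Γ) :
    Config Q In Γ → Config Q In Γ → Prop :=
  Relation.ReflTransGen M.Step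

/-- Acceptance: some finite sequence of steps leads from the initial configuration
`(q0, w, [(Z, ε)])` to a configuration with empty remaining input and empty store. -/
def IPDA2.Accepts {Q In Γ : Type*} (M : IPDA2 Q In Γ) (w : List In) : Prop :=
  ∃ q : Q, M.Steps (M.q0, w, [(M.Z, [])]) (q, [], [])

/-- The two-letter alphabet `{B, W}` of node labels. -/
inductive BW where
  | B : BW
  | W : BW
  deriving DecidableEq

/-- The substitution `σ` determined by `σ(B) = BW` and `σ(W) = BWW`, on letters. -/
def sigmaLetter : BW → List BW
  | .B => [.B, .W]
  | .W => [.B, .W, .W]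

/-- The substitution `σ` extended to words (monoid morphism of words). -/
def sigmaWord (w : List BW) : List BW := w.flatMap sigmaLetter

/-- The two-letter input alphabet `{b, w}`. -/
inductive bw where
  | b : bw
  | w : bw
  deriving DecidableEq

/-- The letter renaming `φ : B ↦ b, W ↦ w`. -/
def phi : BW → bw
  | .B => .b
  | .W => .w

/-- The states of the contour automaton. -/
inductive Qc where
  | q0 : Qc
  | q1 : Qc
  deriving DecidableEq

/-- The store alphabet `Γ = {Z, B, W, F}` of the contour automaton. -/
inductive Γc where
  | Z : Γc
  | B : Γc
  | W : Γc
  | F : Γc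
  deriving DecidableEq

/-- The transition table of the contour automaton `A_α`. -/
def contourδ (α : ℕ) : Qc → Option bw → List Γc → List (Qc × Op Γc)
  | .q0, none, [.Z] => [(.q0, .push2 [.F]), (.q0, .push1 (List.replicate α Γc.W))]
  | .q0, none, [.Z, .F] => [(.q0, .push2 [.F]), (.q0, .push1 (List.replicate α Γc.W))]
  | .q0, none, [.W, .F] => [(.q1, .pop2)]
  | .q0, none, [.B, .F] => [(.q1, .pop2)]
  | .q0, some .b, [.B] => [(.q0, .pop1)]
  | .q0, some .w, [.W] => [(.q0, .pop1)]
  | .q1, none, [.W, .F] => [(.q0, .push1 [.B, .W, .W])]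
  | .q1, none, [.W] => [(.q0, .push1 [.B, .W, .W])]
  | .q1, none, [.B, .F] => [(.q0, .push1 [.B, .W])]
  | .q1, none, [.B] => [(.q0, .push1 [.B, .W])]
  | _, _, _ => []

/-- The contour automaton `A_α`, a 2-iterated pushdown automaton over `{b, w}`. -/
def contourM (α : ℕ) : IPDA2 Qc bw Γc := ⟨.q0, .Z, contourδ α⟩

/-!
A store entry `(X, F^m)` with `X ∈ {B, W}` stands for the word `φ(σ^m(X))`. Popping an entry
`(X, ε)` reads `φ(X)`; trading one `F` (`pop_2`, then state `q_1`) for the entries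
`(Y, F^{m-1})`, `Y ∈ σ(X)` (`push_1`) rewrites `φ(σ^m(X))` as `φ(σ^{m-1}(σ(X)))`. These are the
only moves from such stores, and both preserve the word still to be read, so from such a store
the automaton accepts exactly that word. Before the first `push_1` the store is `[(Z, F^k)]`,
and the only move other than adding an `F` replaces it by `α` entries `(W, F^k)`, standing for
`(φ(σ^k(W)))^α`.
-/

def BW.toΓc : BW → Γc
  | .B => .B
  | .W => .W

def toStore (E : List (BW × ℕ)) : Store Γc :=
  E.map fun e => (e.1.toΓc, List.replicate e.2 .F)

def entryWord (e : BW × ℕ) : List bw :=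
  (sigmaWord^[e.2] [e.1]).map phi

def yield (E : List (BW × ℕ)) : List bw :=
  E.flatMap entryWord

/-- In state `q1` the top entry has just lost one `F` to `pop_2`, which the word still owes. -/
def pending : Qc → List (BW × ℕ) → List bw
  | .q0, E => yield E
  | .q1, [] => []
  | .q1, (X, m) :: E => yield ((X, m + 1) :: E)

lemma sigmaWord_iterate_append (m : ℕ) (L L' : List BW) :
    sigmaWord^[m] (L ++ L') = sigmaWord^[m] L ++ sigmaWord^[m] L' := by
  induction m generalizing L L' with
  | zero => rfl
  | succ m ih => simp only [Function.iterate_succ_apply, sigmaWord, List.flatMap_append, ih]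

lemma sigmaWord_iterate_eq_flatMap (m : ℕ) (L : List BW) :
    sigmaWord^[m] L = L.flatMap fun X => sigmaWord^[m] [X] := by
  induction L with
  | nil => exact Function.iterate_fixed rfl m
  | cons X L ih => rw [← List.singleton_append, sigmaWord_iterate_append, ih]; rfl

lemma entryWord_succ (X : BW) (m : ℕ) :
    entryWord (X, m + 1) = yield ((sigmaLetter X).map (·, m)) := by
  simp only [entryWord, yield, Function.iterate_succ_apply, sigmaWord, List.flatMap_singleton,
    sigmaWord_iterate_eq_flatMap m (sigmaLetter X), List.map_flatMap, List.flatMap_map]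

section ContourSteps

variable {α : ℕ}

lemma step_push_F (u : List bw) (j : ℕ) :
    (contourM α).Step (.q0, u, [(.Z, List.replicate j .F)])
      (.q0, u, [(.Z, List.replicate (j + 1) .F)]) :=
  .eps (op := .push2 [.F]) (by cases j <;> simp [contourM, contourδ, topsym])
    (by simp [applyOp, List.replicate_succ])

lemma step_push_W (u : List bw) (j : ℕ) :
    (contourM α).Step (.q0, u, [(.Z, List.replicate j .F)])
      (.q0, u, toStore (List.replicate α (.W, j))) :=
  .eps (op := .push1 (List.replicate α .W)) (by cases j <;> simp [contourM, contourδ, topsym])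
    (by simp [applyOp, toStore, BW.toΓc])

lemma step_pop2 (X : BW) (m : ℕ) (u : List bw) (ω : Store Γc) :
    (contourM α).Step (.q0, u, (X.toΓc, List.replicate (m + 1) .F) :: ω)
      (.q1, u, (X.toΓc, List.replicate m .F) :: ω) :=
  .eps (op := .pop2) (by cases X <;> simp [contourM, contourδ, topsym, BW.toΓc]) rfl

lemma step_expand (X : BW) (m : ℕ) (u : List bw) (ω : Store Γc) :
    (contourM α).Step (.q1, u, (X.toΓc, List.replicate m .F) :: ω)
      (.q0, u, toStore ((sigmaLetter X).map (·, m)) ++ ω) :=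
  .eps (op := .push1 ((sigmaLetter X).map BW.toΓc))
    (by cases X <;> cases m <;> simp [contourM, contourδ, topsym, BW.toΓc, sigmaLetter])
    (by simp [applyOp, toStore])

lemma step_read (X : BW) (u : List bw) (ω : Store Γc) :
    (contourM α).Step (.q0, phi X :: u, (X.toΓc, []) :: ω) (.q0, u, ω) :=
  .read (op := .pop1) (by cases X <;> simp [contourM, contourδ, topsym, BW.toΓc, phi]) rfl

lemma step_init_cases {j : ℕ} {u : List bw} {c : Config Qc bw Γc}
    (h : (contourM α).Step (.q0, u, [(.Z, List.replicate j .F)]) c) :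
    c = (.q0, u, [(.Z, List.replicate (j + 1) .F)]) ∨
      c = (.q0, u, toStore (List.replicate α (.W, j))) := by
  cases h with
  | @eps _ q' _ _ _ op hδ hop =>
    obtain ⟨rfl, rfl⟩ | ⟨rfl, rfl⟩ :
        q' = .q0 ∧ op = .push2 [.F] ∨ q' = .q0 ∧ op = .push1 (List.replicate α .W) := by
      cases j <;> simpa [contourM, contourδ, topsym] using hδ
    · left
      simpa [applyOp, List.replicate_succ] using hop.symm
    · right
      simpa [applyOp, toStore, BW.toΓc] using hop.symm
  | @read _ _ a _ _ _ _ hδ _ => cases j <;> cases a <;> simp [contourM, contourδ, topsym] at hδ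

lemma exists_pending_of_step {q q' : Qc} {u u' : List bw} {E : List (BW × ℕ)}
    {ω' : Store Γc} (h : (contourM α).Step (q, u, toStore E) (q', u', ω')) :
    ∃ E' v, ω' = toStore E' ∧ u = v ++ u' ∧ pending q E = v ++ pending q' E' := by
  rcases E with _ | ⟨⟨X, m⟩, E⟩
  · cases h <;> simp_all [contourM, contourδ, toStore, topsym]
  cases h with
  | @eps _ _ _ _ _ op hδ hop =>
    cases q
    · obtain _ | m := m
      · cases X <;> simp [contourM, contourδ, toStore, topsym, BW.toΓc] at hδ
      obtain ⟨rfl, rfl⟩ : q' = .q1 ∧ op = .pop2 := by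
        cases X <;> simpa [contourM, contourδ, toStore, topsym, BW.toΓc] using hδ
      exact ⟨(X, m) :: E, [], (Option.some.inj hop).symm, rfl, rfl⟩
    · obtain ⟨rfl, rfl⟩ : q' = .q0 ∧ op = .push1 ((sigmaLetter X).map BW.toΓc) := by
        cases X <;> cases m <;>
          simpa [contourM, contourδ, toStore, topsym, BW.toΓc, sigmaLetter] using hδ
      refine ⟨(sigmaLetter X).map (·, m) ++ E, [], ?_, rfl, ?_⟩
      · simpa [applyOp, toStore, Function.comp_def] using hop.symm
      · simp [pending, yield, entryWord_succ]
  | @read _ _ a _ _ _ op hδ hop =>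
    obtain ⟨rfl, rfl, rfl, rfl, rfl⟩ :
        q = .q0 ∧ q' = .q0 ∧ m = 0 ∧ a = phi X ∧ op = .pop1 := by
      cases q <;> cases X <;> cases m <;> cases a <;>
        simp_all [contourM, contourδ, toStore, topsym, BW.toΓc, phi]
    exact ⟨E, [phi X], (Option.some.inj hop).symm, rfl, rfl⟩

lemma eq_pending_of_steps {q qf : Qc} {u : List bw} {E : List (BW × ℕ)}
    (h : (contourM α).Steps (q, u, toStore E) (qf, [], [])) : u = pending q E := by
  generalize hc : (q, u, toStore E) = c at h
  induction h using Relation.ReflTransGen.head_induction_on generalizing q u E with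
  | refl =>
    simp only [Prod.mk.injEq] at hc
    obtain ⟨rfl, rfl, hE⟩ := hc
    obtain rfl : E = [] := List.map_eq_nil_iff.1 hE
    cases q <;> rfl
  | @head _ c hstep _ ih =>
    subst hc
    obtain ⟨q', u', ω'⟩ := c
    obtain ⟨E', v, rfl, rfl, hp⟩ := exists_pending_of_step hstep
    rw [hp, ih rfl]

lemma exists_eq_yield_of_steps_init {j : ℕ} {u : List bw} {qf : Qc}
    (h : (contourM α).Steps (.q0, u, [(.Z, List.replicate j .F)]) (qf, [], [])) :
    ∃ k, u = yield (List.replicate α (.W, k)) := by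
  generalize hc : (Qc.q0, u, [(Γc.Z, List.replicate j Γc.F)]) = c at h
  induction h using Relation.ReflTransGen.head_induction_on generalizing j with
  | refl => simp at hc
  | head hstep hrest ih =>
    subst hc
    rcases step_init_cases hstep with rfl | rfl
    · exact ih rfl
    · exact ⟨j, eq_pending_of_steps hrest⟩

lemma steps_init (u : List bw) (j : ℕ) :
    (contourM α).Steps (.q0, u, [(.Z, [])]) (.q0, u, toStore (List.replicate α (.W, j))) := by
  have hF (i : ℕ) :
      (contourM α).Steps (.q0, u, [(.Z, [])]) (.q0, u, [(.Z, List.replicate i .F)]) := by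
    induction i with
    | zero => exact .refl
    | succ i ih => exact ih.tail (step_push_F u i)
  exact (hF j).tail (step_push_W u j)

lemma steps_yield_append_of_forall {E : List (BW × ℕ)}
    (hE : ∀ e ∈ E, ∀ u ω,
      (contourM α).Steps (.q0, entryWord e ++ u, toStore [e] ++ ω) (.q0, u, ω))
    (u : List bw) (ω : Store Γc) :
    (contourM α).Steps (.q0, yield E ++ u, toStore E ++ ω) (.q0, u, ω) := by
  induction E generalizing u with
  | nil => exact .refl
  | cons e E ih =>
    have he := hE e List.mem_cons_self (yield E ++ u) (toStore E ++ ω)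
    simp only [yield, List.flatMap_cons, List.append_assoc] at he ⊢
    exact he.trans (ih (fun e' he' => hE e' (List.mem_cons_of_mem e he')) u)

lemma steps_entryWord (e : BW × ℕ) (u : List bw) (ω : Store Γc) :
    (contourM α).Steps (.q0, entryWord e ++ u, toStore [e] ++ ω) (.q0, u, ω) := by
  obtain ⟨X, m⟩ := e
  induction m generalizing X u ω with
  | zero => exact .single (step_read X u ω)
  | succ m ih =>
    rw [entryWord_succ]
    refine .head (step_pop2 X m _ ω) (.head (step_expand X m _ ω) ?_)
    refine steps_yield_append_of_forall (fun e he => ?_) u ω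
    obtain ⟨Y, -, rfl⟩ := List.mem_map.1 he
    exact fun u ω => ih u ω Y

lemma steps_yield (E : List (BW × ℕ)) :
    (contourM α).Steps (.q0, yield E, toStore E) (.q0, [], []) := by
  simpa using steps_yield_append_of_forall (α := α) (E := E) (fun e _ => steps_entryWord e) [] []

end ContourSteps

theorem contourM_language_general (α : ℕ) (u : List bw) :
    (contourM α).Accepts u ↔
      ∃ k : ℕ, u = (List.replicate α ((sigmaWord^[k] [BW.W]).map phi)).flatten := by
  have hyield (k : ℕ) : yield (List.replicate α (.W, k)) =
      (List.replicate α ((sigmaWord^[k] [BW.W]).map phi)).flatten := List.flatMap_replicate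
  simp only [← hyield]
  constructor
  · rintro ⟨qf, h⟩
    exact exists_eq_yield_of_steps_init (j := 0) h
  · rintro ⟨k, rfl⟩
    exact ⟨.q0, (steps_init _ k).trans (steps_yield _)⟩

/-- For every integer `α ≥ 1`, the contour automaton `A_α` accepts a word `u` over
`{b, w}` if and only if `u = (φ(σ^k(W)))^α` for some `k : ℕ`. In particular, for `α = 5`
it recognizes exactly the contour words of the balls of the pentagrid, and for `α = 7`
exactly the contour words of the balls of the heptagrid. -/
theorem contourM_language (α : ℕ) (hα : 1 ≤ α) (u : List bw) :
    (contourM α).Accepts u ↔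
      ∃ k : ℕ, u = (List.replicate α ((sigmaWord^[k] [BW.W]).map phi)).flatten :=
  contourM_language_general α u
end

section
/- For every integer p ≥ 5, set u_n = |σ_p^n(W)| and v_n = |σ_p^n(B)| (lengths of the iterated images). Then u_0 = 1, u_1 = p − 2, v_0 = 1, v_1 = p − 3, and for all n ∈ ℕ: u_{n+2} = (p − 2)·u_{n+1} − u_n and v_{n+2} = (p − 2)·v_{n+1} − v_n. In particular, for p = 5 one has u_n = f_{2n+1} and v_n = f_{2n}, where (f_n) is the Fibonacci sequence with f_0 = f_1 = 1. -/
/-- For `p ≥ 5`, the substitution `σ_p` determined by `σ_p(W) = BW^{p−3}` and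
`σ_p(B) = BW^{p−4}`, on letters; for `p = 5` it is `σ`. -/
def sigmaPLetter (p : ℕ) : BW → List BW
  | .W => BW.B :: List.replicate (p - 3) BW.W
  | .B => BW.B :: List.replicate (p - 4) BW.W

/-- The substitution `σ_p` extended to words (monoid morphism of words). -/
def sigmaPWord (p : ℕ) (w : List BW) : List BW := w.flatMap (sigmaPLetter p)

/-- `u_n = |σ_p^n(W)|`. -/
def uLen (p n : ℕ) : ℕ := ((sigmaPWord p)^[n] [BW.W]).length

/-- `v_n = |σ_p^n(B)|`. -/
def vLen (p n : ℕ) : ℕ := ((sigmaPWord p)^[n] [BW.B]).length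

lemma len_sigma (p : ℕ) (hp : 5 ≤ p) (w : List BW) :
    (sigmaPWord p w).length = (p - 3) * (w.count BW.B) + (p - 2) * (w.count BW.W) := by
  induction w with
  | nil => simp [sigmaPWord]
  | cons a t ih =>
    cases a <;> simp [sigmaPWord, sigmaPLetter, List.count_cons, Nat.mul_add] at * <;> omega

lemma countB_sigma (p : ℕ) (w : List BW) :
    (sigmaPWord p w).count BW.B = w.length := by
  induction w with
  | nil => simp [sigmaPWord]
  | cons a t ih =>
    cases a <;> simp [sigmaPWord, sigmaPLetter, List.count_cons, List.count_replicate] at * <;> omega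

lemma count_sum (w : List BW) : w.count BW.B + w.count BW.W = w.length := by
  induction w with
  | nil => simp
  | cons a t ih => cases a <;> simp [List.count_cons] <;> omega

lemma sigma_append (p : ℕ) (a b : List BW) :
    sigmaPWord p (a ++ b) = sigmaPWord p a ++ sigmaPWord p b := by
  simp [sigmaPWord]

lemma iter_append (p n : ℕ) (a b : List BW) :
    (sigmaPWord p)^[n] (a ++ b) = (sigmaPWord p)^[n] a ++ (sigmaPWord p)^[n] b := by
  induction n generalizing a b with
  | zero => simp
  | succ n ih => simp [Function.iterate_succ_apply, sigma_append, ih]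

lemma key_rec (p : ℕ) (hp : 5 ≤ p) (w : List BW) (n : ℕ) :
    (((sigmaPWord p)^[n + 2] w).length : ℤ)
      = ((p : ℤ) - 2) * ((sigmaPWord p)^[n + 1] w).length - ((sigmaPWord p)^[n] w).length := by
  set x := (sigmaPWord p)^[n + 1] w with hx
  have h1 : (sigmaPWord p)^[n + 2] w = sigmaPWord p x := by
    rw [hx, ← Function.iterate_succ_apply' (sigmaPWord p) (n + 1) w]
  have h2 : x = sigmaPWord p ((sigmaPWord p)^[n] w) := by
    rw [hx, Function.iterate_succ_apply' (sigmaPWord p) n w]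
  have hB : x.count BW.B = ((sigmaPWord p)^[n] w).length := by
    rw [h2, countB_sigma]
  have hS := count_sum x
  have hL := len_sigma p hp x
  have e3 : ((p - 3 : ℕ) : ℤ) = (p : ℤ) - 3 := by omega
  have e2 : ((p - 2 : ℕ) : ℤ) = (p : ℤ) - 2 := by omega
  have hlen : ((sigmaPWord p)^[n + 1] w).length = x.length := by rw [hx]
  have hcW : (x.count BW.W : ℤ) = (x.length : ℤ) - ((sigmaPWord p)^[n] w).length := by
    omega
  rw [h1, hlen]
  calc ((sigmaPWord p x).length : ℤ)
      = ((p : ℤ) - 3) * x.count BW.B + ((p : ℤ) - 2) * x.count BW.W := by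
        rw [hL]; push_cast [e3, e2]; ring
    _ = ((p : ℤ) - 2) * x.length - ((sigmaPWord p)^[n] w).length := by
        rw [hcW, hB]; ring

/-- For every integer `p ≥ 5`, with `u_n = |σ_p^n(W)|` and `v_n = |σ_p^n(B)|`:
`u_0 = 1`, `u_1 = p − 2`, `v_0 = 1`, `v_1 = p − 3`, and for all `n`,
`u_{n+2} = (p − 2)·u_{n+1} − u_n` and `v_{n+2} = (p − 2)·v_{n+1} − v_n` (as integers).
In particular, for `p = 5`, `u_n = f_{2n+1}` and `v_n = f_{2n}`, where `(f_n)` is the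
Fibonacci sequence with `f_0 = f_1 = 1`, i.e. `f_n = Nat.fib (n+1)`. -/
theorem sigmaP_length_recurrence (p : ℕ) (hp : 5 ≤ p) :
    uLen p 0 = 1 ∧ uLen p 1 = p - 2 ∧ vLen p 0 = 1 ∧ vLen p 1 = p - 3 ∧
    (∀ n : ℕ, (uLen p (n + 2) : ℤ) = ((p : ℤ) - 2) * uLen p (n + 1) - uLen p n) ∧
    (∀ n : ℕ, (vLen p (n + 2) : ℤ) = ((p : ℤ) - 2) * vLen p (n + 1) - vLen p n) ∧
    (∀ n : ℕ, uLen 5 n = Nat.fib (2 * n + 2) ∧ vLen 5 n = Nat.fib (2 * n + 1)) := by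
  refine ⟨by simp [uLen], ?_, by simp [vLen], ?_, ?_, ?_, ?_⟩
  · simp [uLen, sigmaPWord, sigmaPLetter]; omega
  · simp [vLen, sigmaPWord, sigmaPLetter]; omega
  · intro n; exact key_rec p hp [BW.W] n
  · intro n; exact key_rec p hp [BW.B] n
  · -- p = 5 Fibonacci
    have huv : ∀ n, uLen 5 (n + 1) = vLen 5 n + 2 * uLen 5 n ∧
        vLen 5 (n + 1) = vLen 5 n + uLen 5 n := by
      intro n
      have hW : (sigmaPWord 5)^[n + 1] [BW.W]
          = (sigmaPWord 5)^[n] [BW.B] ++ ((sigmaPWord 5)^[n] [BW.W] ++ (sigmaPWord 5)^[n] [BW.W]) := by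
        rw [Function.iterate_succ_apply]
        have : sigmaPWord 5 [BW.W] = [BW.B] ++ ([BW.W] ++ [BW.W]) := by decide
        rw [this, iter_append, iter_append]
      have hB : (sigmaPWord 5)^[n + 1] [BW.B]
          = (sigmaPWord 5)^[n] [BW.B] ++ (sigmaPWord 5)^[n] [BW.W] := by
        rw [Function.iterate_succ_apply]
        have : sigmaPWord 5 [BW.B] = [BW.B] ++ [BW.W] := by decide
        rw [this, iter_append]
      constructor
      · simp [uLen, vLen, hW]; omega
      · simp [uLen, vLen, hB]
    intro n
    induction n with
    | zero => simp [uLen, vLen]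
    | succ n ih =>
      obtain ⟨h1, h2⟩ := huv n
      obtain ⟨ih1, ih2⟩ := ih
      have fa : Nat.fib (2 * n + 2) = Nat.fib (2 * n) + Nat.fib (2 * n + 1) :=
        Nat.fib_add_two
      have fb : Nat.fib (2 * n + 3) = Nat.fib (2 * n + 1) + Nat.fib (2 * n + 2) :=
        Nat.fib_add_two
      have fc : Nat.fib (2 * n + 4) = Nat.fib (2 * n + 2) + Nat.fib (2 * n + 3) :=
        Nat.fib_add_two
      have eu : 2 * (n + 1) + 2 = 2 * n + 4 := by ring
      have ev : 2 * (n + 1) + 1 = 2 * n + 3 := by ring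
      constructor
      · rw [h1, ih1, ih2, eu]; omega
      · rw [h2, ih1, ih2, ev]; omega
end
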